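/- arXiv:0706.3152 — 3 statements merged into one kernel-verified Lean document; each statement's English description precedes it below -/
import Mathlib

section
/- Let T = {1,2,3,4,5} ⊆ ℝ and define f : T → ℝ by f(1) = f(5) = 1 and f(t) = 0 for t ∈ {2,3,4}. Then for every function g : T → ℝ with g(1) = g(5) = 0, the nabla integral ∑_{t=2}^{5} f(t)·g(t) equals 0, yet f(1) ≠ 0 and f(5) ≠ 0. (Hence the fundamental lemma of the nabla calculus of variations fails at the endpoints ρ(a) and b.) -/
/-- On the time scale T = {1,2,3,4,5}, the function f with f(1)=f(5)=1 and
f(t)=0 for t ∈ {2,3,4} satisfies ∑_{t=2}^{5} f(t)·g(t) = 0 (the nabla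
integral over [ρ(1),5]) for every g with g(1)=g(5)=0, yet f(1) ≠ 0 and
f(5) ≠ 0. -/
theorem stmt0 (f : ℤ → ℝ) (hf1 : f 1 = 1) (hf5 : f 5 = 1)
    (hf2 : f 2 = 0) (hf3 : f 3 = 0) (hf4 : f 4 = 0) :
    (∀ g : ℤ → ℝ, g 1 = 0 → g 5 = 0 →
      ∑ t ∈ Finset.Icc (2 : ℤ) 5, f t * g t = 0) ∧ f 1 ≠ 0 ∧ f 5 ≠ 0 := by
  refine ⟨fun g _ hg5 => Finset.sum_eq_zero fun t ht => ?_, by simp [hf1], by simp [hf5]⟩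
  obtain ⟨h2t, ht5⟩ := Finset.mem_Icc.mp ht
  interval_cases t <;> simp [hf2, hf3, hf4, hg5]
end

section
/- Let T ⊆ ℝ be a nonempty closed set, bounded above with maximum M and with σ(M) = M, such that the forward jump operator σ : T → T is continuous (in the subspace topology). Then no point t ∈ T is simultaneously left-dense and right-scattered; equivalently, for every left-dense t ∈ T, σ(t) = t. -/
open Classical

/-- If the forward jump operator σ of a time scale T (bounded above with
maximum M, σ(M) = M) is continuous on T, then no point of T is simultaneously
left-dense and right-scattered: left-dense points t satisfy σ(t) = t. -/

theorem stmt11 (T : Set ℝ) (hT : T.Nonempty) (hclosed : IsClosed T)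
    (M : ℝ) (hM : M ∈ T) (hmax : ∀ x ∈ T, x ≤ M)
    (σ : ℝ → ℝ)
    (hσ : ∀ u, σ u = if {v ∈ T | u < v}.Nonempty then sInf {v ∈ T | u < v} else u)
    (hcont : ∀ t ∈ T, ContinuousWithinAt σ T t) :
    ∀ t ∈ T, {s ∈ T | s < t}.Nonempty → sSup {s ∈ T | s < t} = t → σ t = t := by
  intro t ht hne hsup
  set S : Set ℝ := {s ∈ T | s < t} with hS
  -- σ t ≥ t
  have hge : t ≤ σ t := by
    rw [hσ t]
    split_ifs with h
    · exact le_csInf h (fun v hv => le_of_lt hv.2)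
    · exact le_refl t
  -- σ s ≤ t for s ∈ S
  have hle : ∀ s ∈ S, σ s ≤ t := by
    intro s hs
    rw [hσ s]
    have hne' : {v ∈ T | s < v}.Nonempty := ⟨t, ht, hs.2⟩
    rw [if_pos hne']
    exact csInf_le ⟨s, fun v hv => le_of_lt hv.2⟩ ⟨ht, hs.2⟩
  -- t ∈ closure S
  have hbdd : BddAbove S := ⟨t, fun s hs => le_of_lt hs.2⟩
  have hlub : IsLUB S t := hsup ▸ isLUB_csSup hne hbdd
  have hclos : t ∈ closure S := hlub.mem_closure hne
  have hnbot : (nhdsWithin t S).NeBot := mem_closure_iff_nhdsWithin_neBot.mp hclos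
  -- continuity
  have htend : Filter.Tendsto σ (nhdsWithin t S) (nhds (σ t)) :=
    (hcont t ht).mono_left (nhdsWithin_mono t (fun s hs => hs.1))
  have hle' : σ t ≤ t :=
    le_of_tendsto htend (Filter.eventually_of_mem self_mem_nhdsWithin hle)
  exact le_antisymm hle' hge
end

section
/- Fundamental lemma for finite sums with correct domain: let a < b be integers and f : [a,b] ∩ ℤ → ℝ. If ∑_{t=a}^{b−1} f(t)·g(t+1) = 0 for every g : [a,b] ∩ ℤ → ℝ with g(a) = g(b) = 0, then f(t) = 0 for all t with a ≤ t ≤ b − 2; moreover f(b−1) need not vanish. -/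
/-! Testing against the indicator of `t + 1` isolates the coefficient `f t`; such a test function
vanishes at both endpoints exactly when `a ≤ t ≤ b - 2`. Conversely the test values `g (t + 1)`
never include `g a`, and `g b` is forced to vanish, so a coefficient supported at `b - 1` is
invisible to every admissible `g`. -/

open Finset

section

variable {R : Type*} [Semiring R]

theorem sum_mul_single_succ (s : Finset ℤ) (f : ℤ → R) (t₀ : ℤ) :
    ∑ t ∈ s, f t * Pi.single (M := fun _ => R) (t₀ + 1) 1 (t + 1) =
      if t₀ ∈ s then f t₀ else 0 := by
  simp [Pi.single_apply]

theorem eq_zero_of_forall_sum_Ico_mul_succ_eq_zero {a b : ℤ} {f : ℤ → R}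
    (hf : ∀ g : ℤ → R, g a = 0 → g b = 0 → ∑ t ∈ Ico a b, f t * g (t + 1) = 0)
    {t : ℤ} (hat : a ≤ t) (htb : t ≤ b - 2) : f t = 0 := by
  have hbump := hf (Pi.single (t + 1) 1)
    (Pi.single_eq_of_ne (by omega) _) (Pi.single_eq_of_ne (by omega) _)
  rwa [sum_mul_single_succ, if_pos (mem_Ico.2 ⟨hat, by omega⟩)] at hbump

theorem sum_Ico_single_pred_mul_succ_eq_zero (a b : ℤ) (c : R) {g : ℤ → R} (hg : g b = 0) :
    ∑ t ∈ Ico a b, Pi.single (M := fun _ => R) (b - 1) c t * g (t + 1) = 0 := by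
  rw [sum_eq_single (b - 1)]
  · simp [hg]
  · intro t _ ht
    simp [ht]
  · simp [hg]

end

theorem stmt16_general (a b : ℤ) (f : ℤ → ℝ)
    (hf : ∀ g : ℤ → ℝ, g a = 0 → g b = 0 →
      ∑ t ∈ Finset.Ico a b, f t * g (t + 1) = 0) :
    (∀ t : ℤ, a ≤ t → t ≤ b - 2 → f t = 0) ∧
    ∃ f' : ℤ → ℝ, f' (b - 1) ≠ 0 ∧
      ∀ g : ℤ → ℝ, g a = 0 → g b = 0 →
        ∑ t ∈ Finset.Ico a b, f' t * g (t + 1) = 0 :=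
  ⟨fun _ hat htb => eq_zero_of_forall_sum_Ico_mul_succ_eq_zero hf hat htb,
    Pi.single (b - 1) 1, by simp,
    fun _ _ hgb => sum_Ico_single_pred_mul_succ_eq_zero a b 1 hgb⟩

/-- Discrete fundamental lemma with the correct domain: if
∑_{t=a}^{b−1} f(t)·g(t+1) = 0 for every g vanishing at a and b, then f = 0 on
[a, b−2]; moreover f(b−1) need not vanish. -/
theorem stmt16 (a b : ℤ) (hab : a < b) (f : ℤ → ℝ)
    (hf : ∀ g : ℤ → ℝ, g a = 0 → g b = 0 →
      ∑ t ∈ Finset.Ico a b, f t * g (t + 1) = 0) :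
    (∀ t : ℤ, a ≤ t → t ≤ b - 2 → f t = 0) ∧
    ∃ f' : ℤ → ℝ, f' (b - 1) ≠ 0 ∧
      ∀ g : ℤ → ℝ, g a = 0 → g b = 0 →
        ∑ t ∈ Finset.Ico a b, f' t * g (t + 1) = 0 :=
  stmt16_general a b f hf
end
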